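/- arXiv:1404.5454 — 6 statements merged into one kernel-verified Lean document; each statement's English description precedes it below -/
import Mathlib

section
/- The utility f is submodular: for all subsets S ⊆ S' ⊆ W and every v ∈ W with v ∉ S', it holds that f(S ∪ {v}) − f(S) ≥ f(S' ∪ {v}) − f(S'). -/
open Finset

/-- The utility function `f(S) = (1/|W|) · Σ_{w∈W} ( min_{x∈X} D(x, o_w) −
min_{p ∈ {o_s : s∈S} ∪ X} D(p, o_w) )`. -/
noncomputable def util {W M : Type*} [Fintype W] [DecidableEq M] [MetricSpace M]
    (o : W → M) (X : Finset M) (hX : X.Nonempty) (S : Finset W) : ℝ :=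
  (1 / (Fintype.card W : ℝ)) *
    ∑ w : W,
      (X.inf' hX (fun x => dist x (o w)) -
        (S.image o ∪ X).inf' (hX.mono Finset.subset_union_right)
          (fun p => dist p (o w)))

noncomputable def gutil {W M : Type*} [DecidableEq M] [MetricSpace M]
    (o : W → M) (X : Finset M) (hX : X.Nonempty) (S : Finset W) (w : W) : ℝ :=
  (S.image o ∪ X).inf' (hX.mono Finset.subset_union_right) (fun p => dist p (o w))

lemma gutil_insert {W M : Type*} [DecidableEq W] [DecidableEq M] [MetricSpace M]
    (o : W → M) (X : Finset M) (hX : X.Nonempty) (S : Finset W) (v w : W) :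
    gutil o X hX (insert v S) w = min (dist (o v) (o w)) (gutil o X hX S w) := by
  unfold gutil
  have h : (insert v S).image o ∪ X = insert (o v) (S.image o ∪ X) := by
    rw [Finset.image_insert, Finset.insert_union]
  rw [Finset.inf'_congr (hX.mono Finset.subset_union_right) h (fun _ _ => rfl)]
  rw [Finset.inf'_insert]

lemma gutil_mono {W M : Type*} [DecidableEq M] [MetricSpace M]
    (o : W → M) (X : Finset M) (hX : X.Nonempty) {S S' : Finset W} (hSS : S ⊆ S')
    (w : W) : gutil o X hX S' w ≤ gutil o X hX S w := by
  apply Finset.inf'_mono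
  exact Finset.union_subset_union_left (Finset.image_subset_image hSS)

/-- The utility `f` is submodular: for all subsets `S ⊆ S' ⊆ W` and every
`v ∈ W` with `v ∉ S'`, it holds that
`f(S ∪ {v}) − f(S) ≥ f(S' ∪ {v}) − f(S')`. -/
theorem util_submodular {W M : Type*} [Fintype W] [Nonempty W] [DecidableEq W]
    [DecidableEq M] [MetricSpace M]
    (o : W → M) (X : Finset M) (hX : X.Nonempty) :
    ∀ S S' : Finset W, S ⊆ S' → ∀ v : W, v ∉ S' →
      util o X hX (insert v S') - util o X hX S' ≤
        util o X hX (insert v S) - util o X hX S := by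
  intro S S' hSS v _
  have key : ∀ T : Finset W,
      util o X hX T = (1 / (Fintype.card W : ℝ)) *
        ∑ w : W, (X.inf' hX (fun x => dist x (o w)) - gutil o X hX T w) := by
    intro T; rfl
  simp only [key, ← mul_sub, ← Finset.sum_sub_distrib]
  apply mul_le_mul_of_nonneg_left _ (by positivity)
  apply Finset.sum_le_sum
  intro w _
  have h1 := gutil_insert o X hX S v w
  have h2 := gutil_insert o X hX S' v w
  have h3 := gutil_mono o X hX hSS w
  have d := dist (o v) (o w)
  rw [h1, h2]
  rcases le_total (dist (o v) (o w)) (gutil o X hX S' w) with h | h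
  · rw [min_eq_left h, min_eq_left (h.trans h3)]; ring_nf; linarith
  · rw [min_eq_right h]
    rcases le_total (dist (o v) (o w)) (gutil o X hX S w) with h' | h'
    · rw [min_eq_left h']; ring_nf; linarith
    · rw [min_eq_right h']; ring_nf; linarith
end

section
/- The utility f is 1-smooth: let S ⊆ W, let α ≥ 0, and let g : S → W be any map with D(o_{g(s)}, o_s) ≤ α for every s ∈ S; let S̃ = g(S) be the image of S under g. Then |f(S) − f(S̃)| ≤ α; in particular, if S is nonempty then |f(S) − f(S̃)| ≤ α · |S|, so the smoothness parameter λ_f of f is bounded by 1. -/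
open Finset

/-- One-sided bound on the inner infimum under a perturbation of the set. -/
lemma inf_pert {W M : Type*} [Fintype W] [DecidableEq W] [DecidableEq M] [MetricSpace M]
    (o : W → M) (X : Finset M) (hX : X.Nonempty)
    (S : Finset W) (α : ℝ) (hα : 0 ≤ α) (g : W → W)
    (hg : ∀ s ∈ S, dist (o (g s)) (o s) ≤ α) (w : W) :
    ((S.image g).image o ∪ X).inf' (hX.mono Finset.subset_union_right)
        (fun p => dist p (o w)) ≤
      (S.image o ∪ X).inf' (hX.mono Finset.subset_union_right)
        (fun p => dist p (o w)) + α := by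
  obtain ⟨p, hp, hpeq⟩ := Finset.exists_mem_eq_inf' (hX.mono Finset.subset_union_right)
    (fun p => dist p (o w)) (s := S.image o ∪ X)
  rw [hpeq]
  rcases Finset.mem_union.1 hp with hp | hp
  · obtain ⟨s, hs, rfl⟩ := Finset.mem_image.1 hp
    have hmem : o (g s) ∈ (S.image g).image o ∪ X :=
      Finset.mem_union_left _ (Finset.mem_image.2 ⟨g s, Finset.mem_image_of_mem g hs, rfl⟩)
    calc ((S.image g).image o ∪ X).inf' (hX.mono Finset.subset_union_right)
          (fun p => dist p (o w)) ≤ dist (o (g s)) (o w) :=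
        Finset.inf'_le _ hmem
      _ ≤ dist (o (g s)) (o s) + dist (o s) (o w) := dist_triangle _ _ _
      _ ≤ dist (o s) (o w) + α := by linarith [hg s hs]
  · exact le_trans (Finset.inf'_le _ (Finset.mem_union_right _ hp)) (by linarith)

/-- The other one-sided bound. -/
lemma inf_pert' {W M : Type*} [Fintype W] [DecidableEq W] [DecidableEq M] [MetricSpace M]
    (o : W → M) (X : Finset M) (hX : X.Nonempty)
    (S : Finset W) (α : ℝ) (hα : 0 ≤ α) (g : W → W)
    (hg : ∀ s ∈ S, dist (o (g s)) (o s) ≤ α) (w : W) :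
    (S.image o ∪ X).inf' (hX.mono Finset.subset_union_right)
        (fun p => dist p (o w)) ≤
      ((S.image g).image o ∪ X).inf' (hX.mono Finset.subset_union_right)
        (fun p => dist p (o w)) + α := by
  obtain ⟨p, hp, hpeq⟩ := Finset.exists_mem_eq_inf' (hX.mono Finset.subset_union_right)
    (fun p => dist p (o w)) (s := (S.image g).image o ∪ X)
  rw [hpeq]
  rcases Finset.mem_union.1 hp with hp | hp
  · obtain ⟨t, ht, rfl⟩ := Finset.mem_image.1 hp
    obtain ⟨s, hs, rfl⟩ := Finset.mem_image.1 ht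
    have hmem : o s ∈ S.image o ∪ X :=
      Finset.mem_union_left _ (Finset.mem_image_of_mem o hs)
    calc (S.image o ∪ X).inf' (hX.mono Finset.subset_union_right)
          (fun p => dist p (o w)) ≤ dist (o s) (o w) := Finset.inf'_le _ hmem
      _ ≤ dist (o s) (o (g s)) + dist (o (g s)) (o w) := dist_triangle _ _ _
      _ ≤ dist (o (g s)) (o w) + α := by
          have := hg s hs; rw [dist_comm] at this; linarith
  · exact le_trans (Finset.inf'_le _ (Finset.mem_union_right _ hp)) (by linarith)

/-- The utility `f` is 1-smooth: if `g` maps each `s ∈ S` to a user whose attribute is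
within distance `α` of `o_s`, and `S̃ = g(S)`, then `|f(S) − f(S̃)| ≤ α`; in particular,
if `S` is nonempty then `|f(S) − f(S̃)| ≤ α · |S|`, so the smoothness parameter of `f`
is bounded by `1`. -/
theorem util_smooth {W M : Type*} [Fintype W] [Nonempty W] [DecidableEq W]
    [DecidableEq M] [MetricSpace M]
    (o : W → M) (X : Finset M) (hX : X.Nonempty)
    (S : Finset W) (α : ℝ) (hα : 0 ≤ α) (g : W → W)
    (hg : ∀ s ∈ S, dist (o (g s)) (o s) ≤ α) :
    |util o X hX S - util o X hX (S.image g)| ≤ α ∧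
    (S.Nonempty → |util o X hX S - util o X hX (S.image g)| ≤ α * S.card) := by
  have n0 : (0:ℝ) < (Fintype.card W : ℝ) := by positivity
  have key : |util o X hX S - util o X hX (S.image g)| ≤ α := by
    unfold util
    rw [← mul_sub, ← Finset.sum_sub_distrib, abs_mul]
    have h1 : |(1 : ℝ) / (Fintype.card W : ℝ)| = 1 / (Fintype.card W : ℝ) := by
      rw [abs_of_pos]; positivity
    rw [h1]
    have h2 : |∑ w : W, ((X.inf' hX (fun x => dist x (o w)) -
        (S.image o ∪ X).inf' (hX.mono Finset.subset_union_right)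
          (fun p => dist p (o w))) -
        (X.inf' hX (fun x => dist x (o w)) -
        ((S.image g).image o ∪ X).inf' (hX.mono Finset.subset_union_right)
          (fun p => dist p (o w))))| ≤ (Fintype.card W : ℝ) * α := by
      calc _ ≤ ∑ w : W, |(X.inf' hX (fun x => dist x (o w)) -
          (S.image o ∪ X).inf' (hX.mono Finset.subset_union_right)
            (fun p => dist p (o w))) -
          (X.inf' hX (fun x => dist x (o w)) -
          ((S.image g).image o ∪ X).inf' (hX.mono Finset.subset_union_right)
            (fun p => dist p (o w)))| := Finset.abs_sum_le_sum_abs _ _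
        _ ≤ ∑ _w : W, α := by
            refine Finset.sum_le_sum fun w _ => ?_
            rw [abs_sub_le_iff]
            constructor
            · have := inf_pert o X hX S α hα g hg w
              linarith
            · have := inf_pert' o X hX S α hα g hg w
              linarith
        _ = (Fintype.card W : ℝ) * α := by
            rw [Finset.sum_const, Finset.card_univ, nsmul_eq_mul]
    calc (1 : ℝ) / (Fintype.card W : ℝ) * _ ≤
        (1 : ℝ) / (Fintype.card W : ℝ) * ((Fintype.card W : ℝ) * α) := by
          exact mul_le_mul_of_nonneg_left h2 (by positivity)
      _ = α := by field_simp
  refine ⟨key, fun hS => ?_⟩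
  have h1 : (1 : ℝ) ≤ S.card := by
    exact_mod_cast Finset.card_pos.2 hS
  nlinarith
end

section
/- The utility f satisfies the diversification property with parameter 1: for every nonempty subset S ⊆ W and every v ∈ W, setting α = min_{s∈S} D(o_s, o_v), it holds that f(S ∪ {v}) − f(S) ≤ α; hence the diversification parameter Υ_f of f is bounded by 1. -/
open Finset

/-- The utility `f` satisfies the diversification property with parameter 1: for every
nonempty subset `S ⊆ W` and every `v ∈ W`, setting `α = min_{s∈S} D(o_s, o_v)`, it holds
that `f(S ∪ {v}) − f(S) ≤ 1 · α`; hence the diversification parameter of `f` is bounded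
by `1`. -/
theorem util_diversification {W M : Type*} [Fintype W] [Nonempty W] [DecidableEq W]
    [DecidableEq M] [MetricSpace M]
    (o : W → M) (X : Finset M) (hX : X.Nonempty)
    (S : Finset W) (hS : S.Nonempty) (v : W) :
    util o X hX (insert v S) - util o X hX S ≤
      1 * S.inf' hS (fun s => dist (o s) (o v)) := by
  rw [one_mul]
  set α := S.inf' hS (fun s => dist (o s) (o v)) with hα
  have hα0 : 0 ≤ α := Finset.le_inf' hS _ (fun s _ => dist_nonneg)
  obtain ⟨s0, hs0, hs0eq⟩ := S.exists_mem_eq_inf' hS (fun s => dist (o s) (o v))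
  unfold util
  rw [← mul_sub, ← Finset.sum_sub_distrib]
  have hcard : (0 : ℝ) < (Fintype.card W : ℝ) := by
    exact_mod_cast Fintype.card_pos
  have key : ∀ w : W,
      (X.inf' hX (fun x => dist x (o w)) -
        ((insert v S).image o ∪ X).inf' (hX.mono Finset.subset_union_right)
          (fun p => dist p (o w))) -
      (X.inf' hX (fun x => dist x (o w)) -
        (S.image o ∪ X).inf' (hX.mono Finset.subset_union_right)
          (fun p => dist p (o w))) ≤ α := by
    intro w
    set B2 := (S.image o ∪ X).inf' (hX.mono Finset.subset_union_right)
      (fun p => dist p (o w)) with hB2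
    have himg : (insert v S).image o ∪ X = insert (o v) (S.image o ∪ X) := by
      rw [Finset.image_insert, Finset.insert_union]
    have hB1 : ((insert v S).image o ∪ X).inf' (hX.mono Finset.subset_union_right)
        (fun p => dist p (o w)) = min (dist (o v) (o w)) B2 := by
      rw [Finset.inf'_congr (hX.mono Finset.subset_union_right) himg (fun _ _ => rfl)]
      rw [Finset.inf'_insert]
    rw [hB1]
    have hB2le : B2 ≤ α + dist (o v) (o w) := by
      have h1 : B2 ≤ dist (o s0) (o w) := by
        apply Finset.inf'_le
        exact Finset.mem_union_left _ (Finset.mem_image_of_mem o hs0)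
      calc B2 ≤ dist (o s0) (o w) := h1
        _ ≤ dist (o s0) (o v) + dist (o v) (o w) := dist_triangle _ _ _
        _ = α + dist (o v) (o w) := by rw [← hs0eq]
    rcases le_total (dist (o v) (o w)) B2 with h | h
    · rw [min_eq_left h]; linarith
    · rw [min_eq_right h]; linarith
  calc (1 / (Fintype.card W : ℝ)) * ∑ w : W, _ ≤
      (1 / (Fintype.card W : ℝ)) * ∑ _w : W, α := by
        apply mul_le_mul_of_nonneg_left _ (by positivity)
        exact Finset.sum_le_sum (fun w _ => key w)
    _ = α := by
        rw [Finset.sum_const, nsmul_eq_mul, Finset.card_univ]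
        field_simp
end

section
/- Let S* ⊆ W, let W̃ ⊆ W, and let α ≥ 0 be such that for every s ∈ S* there exists w̃ ∈ W̃ with D(o_s, o_{w̃}) ≤ α. Then there exists a subset S̃ ⊆ W̃ with |S̃| ≤ |S*| such that f(S̃) ≥ f(S*) − α. -/
open Finset

/-- Let `S* ⊆ W`, let `W̃ ⊆ W`, and let `α ≥ 0` be such that for every `s ∈ S*`
there exists `w̃ ∈ W̃` with `D(o_s, o_w̃) ≤ α`. Then there exists `S̃ ⊆ W̃` with
`|S̃| ≤ |S*|` such that `f(S̃) ≥ f(S*) − α`. -/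
theorem util_exists_close_subset {W M : Type*} [Fintype W] [Nonempty W]
    [DecidableEq W] [DecidableEq M] [MetricSpace M]
    (o : W → M) (X : Finset M) (hX : X.Nonempty)
    (Sstar Wtilde : Finset W) (α : ℝ) (hα : 0 ≤ α)
    (hcover : ∀ s ∈ Sstar, ∃ w ∈ Wtilde, dist (o s) (o w) ≤ α) :
    ∃ Stilde : Finset W, Stilde ⊆ Wtilde ∧ Stilde.card ≤ Sstar.card ∧
      util o X hX Sstar - α ≤ util o X hX Stilde := by
  classical
  -- choice function
  have hg : ∀ s : W, ∃ w : W, s ∈ Sstar → w ∈ Wtilde ∧ dist (o s) (o w) ≤ α := by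
    intro s
    by_cases hs : s ∈ Sstar
    · obtain ⟨w, hw1, hw2⟩ := hcover s hs
      exact ⟨w, fun _ => ⟨hw1, hw2⟩⟩
    · exact ⟨Classical.arbitrary W, fun h => absurd h hs⟩
  choose g hgp using hg
  refine ⟨Sstar.image g, ?_, ?_, ?_⟩
  · intro x hx
    obtain ⟨s, hs, rfl⟩ := mem_image.mp hx
    exact (hgp s hs).1
  · exact card_image_le
  · -- key pointwise bound
    have key : ∀ w : W,
        ((Sstar.image g).image o ∪ X).inf' (hX.mono Finset.subset_union_right)
          (fun p => dist p (o w)) ≤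
        (Sstar.image o ∪ X).inf' (hX.mono Finset.subset_union_right)
          (fun p => dist p (o w)) + α := by
      intro w
      rw [← sub_le_iff_le_add]
      apply Finset.le_inf'
      intro p hp
      rw [sub_le_iff_le_add]
      rcases mem_union.mp hp with hp | hp
      · obtain ⟨s, hs, rfl⟩ := mem_image.mp hp
        have h1 : o (g s) ∈ (Sstar.image g).image o ∪ X :=
          mem_union_left _ (mem_image_of_mem o (mem_image_of_mem g hs))
        calc ((Sstar.image g).image o ∪ X).inf' _ (fun p => dist p (o w))
            ≤ dist (o (g s)) (o w) := inf'_le _ h1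
          _ ≤ dist (o (g s)) (o s) + dist (o s) (o w) := dist_triangle _ _ _
          _ ≤ dist (o s) (o w) + α := by
              rw [dist_comm]
              linarith [(hgp s hs).2]
      · have h1 : p ∈ (Sstar.image g).image o ∪ X := mem_union_right _ hp
        calc ((Sstar.image g).image o ∪ X).inf' _ (fun q => dist q (o w))
            ≤ dist p (o w) := inf'_le _ h1
          _ ≤ dist p (o w) + α := by linarith
    unfold util
    have hcard : (0 : ℝ) < Fintype.card W := by exact_mod_cast Fintype.card_pos
    set A := ∑ w : W, (X.inf' hX (fun x => dist x (o w)) -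
        (Sstar.image o ∪ X).inf' (hX.mono Finset.subset_union_right)
          (fun p => dist p (o w))) with hA
    set B := ∑ w : W, (X.inf' hX (fun x => dist x (o w)) -
        ((Sstar.image g).image o ∪ X).inf' (hX.mono Finset.subset_union_right)
          (fun p => dist p (o w))) with hB
    have hAB : A - B ≤ (Fintype.card W : ℝ) * α := by
      rw [hA, hB, ← Finset.sum_sub_distrib]
      calc ∑ w : W, _ ≤ ∑ _w : W, α := by
            apply Finset.sum_le_sum
            intro w _
            have := key w
            linarith
        _ = (Fintype.card W : ℝ) * α := by
            rw [Finset.sum_const, card_univ, nsmul_eq_mul]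
    have h2 : (1 / (Fintype.card W : ℝ)) * (A - B) ≤
        (1 / (Fintype.card W : ℝ)) * ((Fintype.card W : ℝ) * α) :=
      mul_le_mul_of_nonneg_left hAB (by positivity)
    have h3 : (1 / (Fintype.card W : ℝ)) * ((Fintype.card W : ℝ) * α) = α := by
      field_simp
    nlinarith [h2, h3]
end

section
/- Utility guarantee for random sampling followed by near-optimal selection: let W be a finite set, let (M, D) be a metric space with attribute map w ↦ o_w from W to M, and let f be a non-negative, monotone, submodular set function on subsets of W with smoothness parameter λ ≥ 0. Let B ≥ 1 be a natural number, let r ∈ (0,1), let ε ∈ (0,1), and let α ≥ 0. Let S_OPT ⊆ W with |S_OPT| ≤ B maximize f over all subsets of W of cardinality at most B, and suppose there exist pairwise disjoint sets N_s ⊆ { w ∈ W : D(o_w, o_s) ≤ α }, one for each s ∈ S_OPT, each of size at least (1/r) · ln(B/ε). Let W̃ be a random subset of W obtained by including each element of W independently with probability r. Then with probability at least 1 − ε the following holds: every subset S_G ⊆ W̃ with |S_G| ≤ B and f(S_G) ≥ (1 − 1/e) · max{ f(S) : S ⊆ W̃, |S| ≤ B } satisfies f(S_G) ≥ (1 − 1/e)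 · ( f(S_OPT) − λ · α · B ). -/
/-!
If every neighbourhood `N s` (`s ∈ S_OPT`) contains a sampled element `g s`, then `g(S_OPT)` is a
feasible set inside the sample and smoothness gives `f(g(S_OPT)) ≥ f(S_OPT) − λαB`, so the
maximum over the sample, and hence any `(1 − 1/e)`-approximate maximizer, is bounded accordingly.
A fixed neighbourhood of size `n` misses the sample with probability
`(1 − r)^n ≤ e^{−rn} ≤ ε/B`, and a union bound over the at most `B` elements of `S_OPT`
finishes the argument.
-/

open Finset MeasureTheory
open scoped ENNReal NNReal

theorem one_sub_pow_le_inv_of_log_le {r c : ℝ} {n : ℕ} (hr1 : r ≤ 1) (hc : 0 < c)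
    (hn : Real.log c ≤ r * n) : (1 - r) ^ n ≤ c⁻¹ :=
  calc (1 - r) ^ n ≤ Real.exp (-r) ^ n :=
        pow_le_pow_left₀ (by linarith) (Real.one_sub_le_exp_neg r) n
    _ = Real.exp (-(r * n)) := by rw [← Real.exp_nat_mul]; ring_nf
    _ ≤ Real.exp (-Real.log c) := Real.exp_le_exp.mpr (neg_le_neg hn)
    _ = c⁻¹ := by rw [Real.exp_neg, Real.exp_log hc]

section Bernoulli

variable {W : Type*} [Fintype W] (p : ℝ≥0) (hp : p ≤ 1)

theorem pi_bernoulli_forall_false (T : Finset W) :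
    Measure.pi (fun _ : W => (PMF.bernoulli p hp).toMeasure) {ω | ∀ w ∈ T, ω w = false} =
      (1 - (p : ℝ≥0∞)) ^ T.card := by
  classical
  have hpi : {ω : W → Bool | ∀ w ∈ T, ω w = false} =
      Set.univ.pi (fun w => if w ∈ T then {false} else Set.univ) := by
    ext ω
    simp only [Set.mem_ofPred_eq, Set.mem_univ_pi]
    exact forall_congr' fun w => by split_ifs with hw <;> simp [hw]
  have hfalse : (PMF.bernoulli p hp).toMeasure {false} = 1 - p := by
    rw [PMF.toMeasure_apply_singleton _ _ (measurableSet_singleton _), PMF.bernoulli_apply]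
    rfl
  rw [hpi, Measure.pi_pi]
  simp_rw [apply_ite (PMF.bernoulli p hp).toMeasure, hfalse, measure_univ]
  rw [prod_ite_mem, univ_inter, prod_const]

theorem pi_bernoulli_forall_exists_true_ge {ι : Type*} (S : Finset ι) (N : ι → Finset W)
    {δ : ℝ≥0∞} (hδ : ∀ s ∈ S, (1 - (p : ℝ≥0∞)) ^ (N s).card ≤ δ) :
    1 - S.card * δ ≤
      Measure.pi (fun _ : W => (PMF.bernoulli p hp).toMeasure)
        {ω | ∀ s ∈ S, ∃ w ∈ N s, ω w = true} := by
  set μ := Measure.pi (fun _ : W => (PMF.bernoulli p hp).toMeasure)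
  have hmiss : {ω : W → Bool | ∀ s ∈ S, ∃ w ∈ N s, ω w = true}ᶜ ⊆
      ⋃ s ∈ S, {ω | ∀ w ∈ N s, ω w = false} := by
    intro ω hω
    simpa using hω
  have hunion : μ {ω | ∀ s ∈ S, ∃ w ∈ N s, ω w = true}ᶜ ≤ S.card * δ :=
    calc _ ≤ ∑ s ∈ S, μ {ω | ∀ w ∈ N s, ω w = false} :=
          (measure_mono hmiss).trans (measure_biUnion_finset_le _ _)
      _ ≤ ∑ _s ∈ S, δ := by
          gcongr with s hs
          rw [pi_bernoulli_forall_false]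
          exact hδ s hs
      _ = S.card * δ := by rw [sum_const, nsmul_eq_mul]
  rw [prob_compl_eq_one_sub (Set.toFinite _).measurableSet] at hunion
  exact tsub_le_iff_tsub_le.mp hunion

end Bernoulli

def SmoothWith {W M : Type*} [DecidableEq W] [MetricSpace M] (o : W → M) (f : Finset W → ℝ)
    (lam : ℝ) : Prop :=
  ∀ (S : Finset W) (β : ℝ) (g : W → W), 0 ≤ β →
    (∀ s ∈ S, dist (o (g s)) (o s) ≤ β) → |f S - f (S.image g)| ≤ lam * β * S.card

section Smoothness

variable {W M : Type*} [DecidableEq W] [MetricSpace M] {o : W → M} {f : Finset W → ℝ}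
  {lam α : ℝ} {B : ℕ} {S : Finset W}

theorem SmoothWith.sub_le_image (hf : SmoothWith o f lam) (hlam : 0 ≤ lam) (hα : 0 ≤ α)
    (hS : S.card ≤ B) {g : W → W} (hg : ∀ s ∈ S, dist (o (g s)) (o s) ≤ α) :
    f S - lam * α * B ≤ f (S.image g) := by
  have hcard : lam * α * S.card ≤ lam * α * B := by gcongr
  linarith [(abs_le.mp (hf S α g hα hg)).2]

theorem SmoothWith.sub_le_sup'_of_forall_exists_mem (hf : SmoothWith o f lam) (hlam : 0 ≤ lam)
    (hα : 0 ≤ α) (hS : S.card ≤ B) {N : W → Finset W}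
    (hN : ∀ s ∈ S, ∀ w ∈ N s, dist (o w) (o s) ≤ α) {T : Finset W}
    (hT : ∀ s ∈ S, ∃ w ∈ N s, w ∈ T) :
    f S - lam * α * B ≤ (T.powerset.filter (fun S' => S'.card ≤ B)).sup' ⟨∅, by simp⟩ f := by
  choose! g hgN hgT using hT
  refine (hf.sub_le_image hlam hα hS fun s hs => hN s hs _ (hgN s hs)).trans (le_sup' f ?_)
  rw [mem_filter, mem_powerset]
  exact ⟨image_subset_iff.mpr hgT, card_image_le.trans hS⟩

end Smoothness

/-- Utility guarantee for random sampling followed by near-optimal selection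
(`RandGreedy`): let `f` be a non-negative, monotone, submodular set function on subsets
of a finite set `W` with smoothness parameter `λ ≥ 0` (w.r.t. the attribute map
`o : W → M` into a metric space). Let `S_OPT` maximize `f` over subsets of cardinality
at most `B`, and suppose each `s ∈ S_OPT` has a set `N s` of at least
`(1/r) · ln(B/ε)` users whose attributes are within distance `α` of `o_s`, these sets
being pairwise disjoint. If `W̃` includes each user independently with probability `r`,
then with probability at least `1 − ε`, every `(1 − 1/e)`-approximate maximizer
`S_G ⊆ W̃` with `|S_G| ≤ B` satisfies `f(S_G) ≥ (1 − 1/e) · (f(S_OPT) − λ · α · B)`. -/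
theorem randgreedy_guarantee {W M : Type*} [Fintype W] [DecidableEq W] [MetricSpace M]
    (o : W → M)
    (f : Finset W → ℝ)
    (lam : ℝ) (hlam : 0 ≤ lam)
    (hsmooth : ∀ (S : Finset W) (β : ℝ) (g : W → W), 0 ≤ β →
      (∀ s ∈ S, dist (o (g s)) (o s) ≤ β) →
      |f S - f (S.image g)| ≤ lam * β * S.card)
    (B : ℕ) (hB : 1 ≤ B) (r : ℝ) (hr0 : 0 < r) (hr1 : r < 1)
    (ε : ℝ) (hε0 : 0 < ε) (α : ℝ) (hα : 0 ≤ α)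
    (SOPT : Finset W) (hSOPTcard : SOPT.card ≤ B)
    (N : W → Finset W)
    (hNnear : ∀ s ∈ SOPT, ∀ w ∈ N s, dist (o w) (o s) ≤ α)
    (hNcard : ∀ s ∈ SOPT, (1 / r) * Real.log ((B : ℝ) / ε) ≤ ((N s).card : ℝ)) :
    ENNReal.ofReal (1 - ε) ≤
      Measure.pi
        (fun _ : W => (PMF.bernoulli (Real.toNNReal r)
          (Real.toNNReal_le_one.mpr hr1.le)).toMeasure)
        {ω : W → Bool |
          ∀ SG : Finset W,
            SG ⊆ Finset.univ.filter (fun w => ω w = true) → SG.card ≤ B →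
            (1 - 1 / Real.exp 1) *
                (((Finset.univ.filter (fun w => ω w = true)).powerset.filter
                    (fun S : Finset W => S.card ≤ B)).sup' ⟨∅, by simp⟩ f)
              ≤ f SG →
            (1 - 1 / Real.exp 1) * (f SOPT - lam * α * B) ≤ f SG} := by
  have hBpos : (0 : ℝ) < B := by exact_mod_cast hB
  have hmiss : ∀ s ∈ SOPT,
      (1 - (r.toNNReal : ℝ≥0∞)) ^ (N s).card ≤ ENNReal.ofReal (ε / B) := by
    intro s hs
    have hlog : Real.log (B / ε) ≤ r * (N s).card := by
      have hn := hNcard s hs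
      rwa [one_div_mul_eq_div, div_le_iff₀' hr0] at hn
    change (1 - ENNReal.ofReal r) ^ _ ≤ _
    rw [← inv_div, ← ENNReal.ofReal_one, ← ENNReal.ofReal_sub _ hr0.le,
      ← ENNReal.ofReal_pow (by linarith)]
    exact ENNReal.ofReal_le_ofReal (one_sub_pow_le_inv_of_log_le hr1.le (by positivity) hlog)
  have hε : ENNReal.ofReal (1 - ε) = 1 - B * ENNReal.ofReal (ε / B) := by
    rw [← ENNReal.ofReal_natCast, ← ENNReal.ofReal_mul hBpos.le, mul_div_cancel₀ _ hBpos.ne',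
      ENNReal.ofReal_sub _ hε0.le, ENNReal.ofReal_one]
  refine le_trans ?_ (measure_mono (s := {ω | ∀ s ∈ SOPT, ∃ w ∈ N s, ω w = true}) ?_)
  · calc ENNReal.ofReal (1 - ε) ≤ 1 - SOPT.card * ENNReal.ofReal (ε / B) := by
          rw [hε]; gcongr
      _ ≤ _ := pi_bernoulli_forall_exists_true_ge _ _ SOPT N hmiss
  · intro ω hω SG _ _ hSG
    have hfac : 0 ≤ 1 - 1 / Real.exp 1 :=
      sub_nonneg.mpr ((div_le_one (Real.exp_pos 1)).mpr (Real.one_le_exp zero_le_one))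
    refine (mul_le_mul_of_nonneg_left ?_ hfac).trans hSG
    exact SmoothWith.sub_le_sup'_of_forall_exists_mem hsmooth hlam hα hSOPTcard hNnear
      (by simpa using hω)
end

section
/- Approximate (noisy) greedy guarantee: let V be a finite set, let f be a non-negative, monotone, submodular set function on subsets of V with f(∅) = 0, let B ≥ 1 be a natural number, and let ε ≥ 0. Let s_1, …, s_B be a sequence of elements of V such that for each i = 1, …, B, writing S_{i−1} = {s_1, …, s_{i−1}}, the marginal gain satisfies f(S_{i−1} ∪ {s_i}) − f(S_{i−1}) ≥ max_{w ∈ V} ( f(S_{i−1} ∪ {w}) − f(S_{i−1}) ) − 2ε. Then f({s_1, …, s_B}) ≥ (1 − 1/e) · max{ f(S) : S ⊆ V, |S| ≤ B } − 2 · ε · B. -/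
open Finset

/-!
Let `T` be an optimal set of size at most `B` and `δᵢ = f T - f Sᵢ` the remaining gap after `i`
greedy steps. Submodularity bounds `f (Sᵢ ∪ T) - f Sᵢ` by the sum of the `|T| ≤ B` single-element
gains at `Sᵢ`, so the best gain is at least `δᵢ / B` and a `2ε`-approximate greedy choice gives
`δᵢ₊₁ ≤ (1 - 1/B) δᵢ + 2ε`. Unrolling, `δ_B ≤ (1 - 1/B)^B δ₀ + 2εB ≤ δ₀ / e + 2εB`.
-/

def IsSubmodular {V : Type*} [DecidableEq V] (f : Finset V → ℝ) : Prop :=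
  ∀ S S' : Finset V, S ⊆ S' → ∀ v ∉ S', f (insert v S') - f S' ≤ f (insert v S) - f S

section SetFunction

variable {V : Type*} [DecidableEq V] {f : Finset V → ℝ}

theorem IsSubmodular.union_sub_le_sum (hsub : IsSubmodular f) (S T : Finset V) :
    f (S ∪ T) - f S ≤ ∑ t ∈ T, (f (insert t S) - f S) := by
  induction T using Finset.induction with
  | empty => simp
  | @insert a T haT ih =>
    rw [sum_insert haT]
    have hstep : f (S ∪ insert a T) - f (S ∪ T) ≤ f (insert a S) - f S := by
      rw [union_insert]
      by_cases haS : a ∈ S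
      · simp [haS]
      · exact hsub S (S ∪ T) subset_union_left a (by simp [haS, haT])
    linarith

variable [Fintype V] [Nonempty V]

def maxGain (f : Finset V → ℝ) (S : Finset V) : ℝ :=
  univ.sup' univ_nonempty fun w => f (insert w S) - f S

theorem le_maxGain (f : Finset V → ℝ) (S : Finset V) (w : V) :
    f (insert w S) - f S ≤ maxGain f S :=
  le_sup' (fun w => f (insert w S) - f S) (mem_univ w)

theorem maxGain_nonneg (hmono : Monotone f) (S : Finset V) : 0 ≤ maxGain f S :=
  (sub_nonneg.2 (hmono (subset_insert _ S))).trans (le_maxGain f S (Classical.arbitrary V))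

theorem sub_le_card_mul_maxGain (hmono : Monotone f) (hsub : IsSubmodular f)
    (S T : Finset V) : f T - f S ≤ #T * maxGain f S :=
  calc f T - f S ≤ f (S ∪ T) - f S := by linarith [hmono (subset_union_right : T ⊆ S ∪ T)]
    _ ≤ ∑ t ∈ T, (f (insert t S) - f S) := hsub.union_sub_le_sum S T
    _ ≤ #T • maxGain f S := sum_le_card_nsmul _ _ _ fun t _ => le_maxGain f S t
    _ = #T * maxGain f S := nsmul_eq_mul _ _

theorem sub_insert_le_of_le_maxGain (hmono : Monotone f) (hsub : IsSubmodular f)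
    {B : ℕ} (hB : 1 ≤ B) {T : Finset V} (hT : #T ≤ B) {ε : ℝ} {S : Finset V} {v : V}
    (hv : maxGain f S - 2 * ε ≤ f (insert v S) - f S) :
    f T - f (insert v S) ≤ (1 - 1 / B) * (f T - f S) + 2 * ε := by
  have hBpos : (0 : ℝ) < B := by exact_mod_cast hB
  have hgap : (f T - f S) / B ≤ maxGain f S := by
    rw [div_le_iff₀ hBpos, mul_comm]
    calc f T - f S ≤ #T * maxGain f S := sub_le_card_mul_maxGain hmono hsub S T
      _ ≤ B * maxGain f S := by gcongr; exact maxGain_nonneg hmono S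
  have hsplit : (1 - 1 / B) * (f T - f S) = (f T - f S) - (f T - f S) / B := by ring
  linarith

end SetFunction

theorem le_pow_mul_add_mul_of_le_mul_add {δ : ℕ → ℝ} {c η : ℝ} (hc₀ : 0 ≤ c) (hc₁ : c ≤ 1)
    (hη : 0 ≤ η) {n : ℕ} (hδ : ∀ i < n, δ (i + 1) ≤ c * δ i + η) :
    δ n ≤ c ^ n * δ 0 + n * η := by
  induction n with
  | zero => simp
  | succ n ih =>
    have ih := ih fun i hi => hδ i (hi.trans n.lt_succ_self)
    have hdamp : c * (n * η) ≤ n * η := mul_le_of_le_one_left (by positivity) hc₁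
    calc δ (n + 1) ≤ c * δ n + η := hδ n n.lt_succ_self
      _ ≤ c * (c ^ n * δ 0 + n * η) + η := by gcongr
      _ = c ^ (n + 1) * δ 0 + c * (n * η) + η := by ring
      _ ≤ c ^ (n + 1) * δ 0 + (n + 1 : ℕ) * η := by push_cast; linarith

theorem one_sub_one_div_pow_le_one_div_exp {B : ℕ} (hB : 1 ≤ B) :
    (1 - 1 / B : ℝ) ^ B ≤ 1 / Real.exp 1 := by
  rw [one_div (Real.exp 1), ← Real.exp_neg]
  exact Real.one_sub_div_pow_le_exp_neg (by exact_mod_cast hB)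

/-- Approximate (noisy) greedy guarantee: let `f` be a non-negative, monotone,
submodular set function on subsets of a finite set `V` with `f(∅) = 0`, let `B ≥ 1` and
`ε ≥ 0`. If `s_1, …, s_B` (here `s 0, …, s (B-1)`) is a sequence of elements of `V`
such that at each step the selected element's marginal gain is within `2ε` of the best
marginal gain, then `f({s_1, …, s_B}) ≥ (1 − 1/e) · max{ f(S) : |S| ≤ B } − 2 · ε · B`. -/
theorem noisy_greedy_guarantee {V : Type*} [Fintype V] [DecidableEq V] [Nonempty V]
    (f : Finset V → ℝ) (hempty : f ∅ = 0)
    (hmono : ∀ S S' : Finset V, S ⊆ S' → f S ≤ f S')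
    (hsub : ∀ S S' : Finset V, S ⊆ S' → ∀ v ∉ S',
      f (insert v S') - f S' ≤ f (insert v S) - f S)
    (B : ℕ) (hB : 1 ≤ B) (ε : ℝ) (hε : 0 ≤ ε) (s : ℕ → V)
    (hgreedy : ∀ i < B,
      (Finset.univ.sup' Finset.univ_nonempty
          (fun w : V =>
            f (insert w ((Finset.range i).image s)) - f ((Finset.range i).image s)))
        - 2 * ε ≤
      f (insert (s i) ((Finset.range i).image s)) - f ((Finset.range i).image s)) :
    (1 - 1 / Real.exp 1) *
        ((Finset.univ.filter (fun S : Finset V => S.card ≤ B)).sup' ⟨∅, by simp⟩ f)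
      - 2 * ε * B ≤ f ((Finset.range B).image s) := by
  have hmono' : Monotone f := fun S S' h => hmono S S' h
  obtain ⟨T, hTmem, hTeq⟩ := exists_mem_eq_sup' (s := univ.filter fun S : Finset V => #S ≤ B)
    ⟨∅, by simp⟩ f
  rw [hTeq]
  have hT : #T ≤ B := (mem_filter.1 hTmem).2
  have hc₀ : (0 : ℝ) ≤ 1 - 1 / B :=
    sub_nonneg.2 (div_le_one_of_le₀ (by exact_mod_cast hB) B.cast_nonneg)
  have hc₁ : (1 : ℝ) - 1 / B ≤ 1 := sub_le_self _ (by positivity)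
  have hgap := le_pow_mul_add_mul_of_le_mul_add (δ := fun i => f T - f ((range i).image s))
    hc₀ hc₁ (by linarith : 0 ≤ 2 * ε) fun i hi => by
      simpa [range_add_one, image_insert] using
        sub_insert_le_of_le_maxGain hmono' hsub hB hT (hgreedy i hi)
  have hfT : 0 ≤ f T := hempty ▸ hmono' (empty_subset T)
  have hdecay := mul_le_mul_of_nonneg_right (one_sub_one_div_pow_le_one_div_exp hB) hfT
  simp only [range_zero, image_empty, hempty, sub_zero] at hgap
  linarith
end
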